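/- arXiv:1902.03967 — 3 statements merged into one kernel-verified Lean document; each statement's English description precedes it below -/
import Mathlib

section
/- Abstract a posteriori (primal-dual gap) estimate: let u ∈ X minimize E over X with E(u) finite, let ρ_E : X × X → [0,∞) satisfy the coercivity inequality ρ_E(v,u) + E(u) ≤ E(v) for all v ∈ X, let X_h ⊆ X and Y_h ⊆ Y', and let u_h ∈ X_h minimize E over X_h. Then for every w_h ∈ X_h and every q_h ∈ Y_h one has ρ_E(u_h,u) ≤ E(w_h) - D(q_h). -/
/-!
Fenchel–Young at `u` gives weak duality `D(q_h) ≤ E(u)`, while coercivity and the discrete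
minimality of `u_h` give `ρ(u_h,u) + E(u) ≤ E(u_h) ≤ E(w_h)`; subtracting the finite value
`E(u)` yields the gap estimate.
-/

namespace EReal

/-- Holds in all of `EReal`: if `a` or `g` is `⊥`, the corresponding lower bound forces `x` or
`y` to be `⊤`, and the left side is `⊥`. -/
theorem neg_sub_le_add_of_sub_le {x y a g : EReal} (t : ℝ) (hx : (t : EReal) - a ≤ x)
    (hy : ((-t : ℝ) : EReal) - g ≤ y) : -x - y ≤ a + g := by
  refine (sub_le_sub (neg_le_neg_iff.mpr hx) hy).trans ?_
  induction a using EReal.rec <;> induction g using EReal.rec <;> simp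
  norm_cast
  linarith

theorem le_sub_of_add_le_of_le {r c e d : EReal} (hc_bot : c ≠ ⊥) (hc_top : c ≠ ⊤)
    (h : r + c ≤ e) (hd : d ≤ c) : r ≤ e - d :=
  ((le_sub_iff_add_le (.inl hc_bot) (.inl hc_top)).mpr h).trans (sub_le_sub le_rfl hd)

end EReal

section FenchelDuality

variable {X Y : Type*} [TopologicalSpace X] [AddCommGroup X] [Module ℝ X]
  [TopologicalSpace Y] [AddCommGroup Y] [Module ℝ Y]

noncomputable def fenchelConjugate (F : Y → EReal) (q : Y →L[ℝ] ℝ) : EReal :=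
  ⨆ p, (q p : EReal) - F p

theorem le_fenchelConjugate (F : Y → EReal) (q : Y →L[ℝ] ℝ) (p : Y) :
    (q p : EReal) - F p ≤ fenchelConjugate F q :=
  le_iSup (fun p ↦ (q p : EReal) - F p) p

theorem fenchel_weak_duality (B : X →L[ℝ] Y) (F : Y → EReal) (G : X → EReal)
    (q : Y →L[ℝ] ℝ) (v : X) :
    -fenchelConjugate F q - fenchelConjugate G (-(q.comp B)) ≤ F (B v) + G v := by
  refine EReal.neg_sub_le_add_of_sub_le (q (B v)) (le_fenchelConjugate F q (B v)) ?_
  simpa using le_fenchelConjugate G (-(q.comp B)) v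

end FenchelDuality

theorem abstract_a_posteriori_primal_dual_gap_general
    {X Y : Type*} [NormedAddCommGroup X] [NormedSpace ℝ X]
    [NormedAddCommGroup Y] [NormedSpace ℝ Y]
    (B : X →L[ℝ] Y) (F : Y → EReal) (G : X → EReal)
    (Fstar : (Y →L[ℝ] ℝ) → EReal)
    (hFstar : ∀ q : Y →L[ℝ] ℝ, Fstar q = ⨆ p : Y, ((q p : EReal) - F p))
    (Gstar : (X →L[ℝ] ℝ) → EReal)
    (hGstar : ∀ w : X →L[ℝ] ℝ, Gstar w = ⨆ v : X, ((w v : EReal) - G v))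
    (E : X → EReal) (hE : ∀ v, E v = F (B v) + G v)
    (D : (Y →L[ℝ] ℝ) → EReal)
    (hD : ∀ q : Y →L[ℝ] ℝ, D q = -Fstar q - Gstar (-(q.comp B)))
    (ρ : X → X → ℝ)
    (u : X)
    (hu_top : E u ≠ ⊤) (hu_bot : E u ≠ ⊥)
    (hcoercive : ∀ v : X, (ρ v u : EReal) + E u ≤ E v)
    (Xh : Set X)
    (uh : X) (huh_min : ∀ vh ∈ Xh, E uh ≤ E vh)
    (wh : X) (hwh : wh ∈ Xh) (qh : Y →L[ℝ] ℝ) :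
    (ρ uh u : EReal) ≤ E wh - D qh := by
  have hdual : D qh ≤ E u := by
    rw [hD, hFstar, hGstar, hE]
    exact fenchel_weak_duality B F G qh u
  exact EReal.le_sub_of_add_le_of_le hu_bot hu_top ((hcoercive uh).trans (huh_min wh hwh)) hdual

/-- Abstract a posteriori (primal-dual gap) estimate: if `u` minimizes
`E(v) = F(Bv) + G(v)` over `X` with `E(u)` finite, `ρ_E` satisfies the
coercivity inequality `ρ_E(v,u) + E(u) ≤ E(v)` for all `v ∈ X`, and
`u_h ∈ X_h ⊆ X` minimizes `E` over `X_h`, then for every `w_h ∈ X_h` and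
every `q_h ∈ Y_h ⊆ Y'` one has `ρ_E(u_h,u) ≤ E(w_h) - D(q_h)`, where
`D(q) = -F*(q) - G*(-B'q)`. -/
theorem abstract_a_posteriori_primal_dual_gap
    {X Y : Type*} [NormedAddCommGroup X] [NormedSpace ℝ X]
    [NormedAddCommGroup Y] [NormedSpace ℝ Y]
    (B : X →L[ℝ] Y) (F : Y → EReal) (G : X → EReal)
    (hF_bot : ∀ p, F p ≠ ⊥) (hF_proper : ∃ p, F p ≠ ⊤)
    (hG_bot : ∀ w, G w ≠ ⊥) (hG_proper : ∃ w, G w ≠ ⊤)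
    (Fstar : (Y →L[ℝ] ℝ) → EReal)
    (hFstar : ∀ q : Y →L[ℝ] ℝ, Fstar q = ⨆ p : Y, ((q p : EReal) - F p))
    (Gstar : (X →L[ℝ] ℝ) → EReal)
    (hGstar : ∀ w : X →L[ℝ] ℝ, Gstar w = ⨆ v : X, ((w v : EReal) - G v))
    (E : X → EReal) (hE : ∀ v, E v = F (B v) + G v)
    (D : (Y →L[ℝ] ℝ) → EReal)
    (hD : ∀ q : Y →L[ℝ] ℝ, D q = -Fstar q - Gstar (-(q.comp B)))
    (ρ : X → X → ℝ) (hρ : ∀ v w, 0 ≤ ρ v w)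
    (u : X) (hu_min : ∀ v : X, E u ≤ E v)
    (hu_top : E u ≠ ⊤) (hu_bot : E u ≠ ⊥)
    (hcoercive : ∀ v : X, (ρ v u : EReal) + E u ≤ E v)
    (Xh : Set X) (Yh : Set (Y →L[ℝ] ℝ))
    (uh : X) (huh_mem : uh ∈ Xh) (huh_min : ∀ vh ∈ Xh, E uh ≤ E vh)
    (wh : X) (hwh : wh ∈ Xh) (qh : Y →L[ℝ] ℝ) (hqh : qh ∈ Yh) :
    (ρ uh u : EReal) ≤ E wh - D qh :=
  abstract_a_posteriori_primal_dual_gap_general B F G Fstar hFstar Gstar hGstar E hE D hD ρ u hu_top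
    hu_bot hcoercive Xh uh huh_min wh hwh qh
end

section
/- Hilbert-space a posteriori primal-dual gap estimate with quadratic fidelity: let X be a real Hilbert space, Y a real normed space, B : X → Y a bounded linear operator, F : Y → ℝ ∪ {∞} proper, α > 0 and g ∈ X, and set E(v) = F(Bv) + (α/2)‖v - g‖². Assume F is convex and u ∈ X minimizes E over X with E(u) finite. Then for every v ∈ X and every q ∈ Y', letting w ∈ X be the Riesz representative of the adjoint, i.e. ⟨w, x⟩_X = ⟨q, Bx⟩ for all x ∈ X, one has (α/2)‖u - v‖² ≤ F(Bv) + (α/2)‖v - g‖² + F*(q) + (1/(2α))‖w‖² - ⟨w, g⟩_X. -/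
open scoped RealInnerProductSpace

lemma quad_convex_identity {X : Type*} [NormedAddCommGroup X] [InnerProductSpace ℝ X]
    (x y : X) (t : ℝ) :
    ‖t • x + (1 - t) • y‖ ^ 2
      = t * ‖x‖ ^ 2 + (1 - t) * ‖y‖ ^ 2 - t * (1 - t) * ‖x - y‖ ^ 2 := by
  have e : ∀ z : X, ‖z‖ ^ 2 = ⟪z, z⟫ := fun z => (real_inner_self_eq_norm_sq z).symm
  rw [e, e, e, e]
  simp only [inner_add_left, inner_add_right, inner_sub_left, inner_sub_right,
    real_inner_smul_left, real_inner_smul_right]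
  rw [real_inner_comm y x]
  ring

/-- Hilbert-space a posteriori primal-dual gap estimate with quadratic
fidelity: let `X` be a real Hilbert space, `B : X → Y` bounded linear,
`F` proper convex, `α > 0`, `g ∈ X`, `E(v) = F(Bv) + (α/2)‖v - g‖²`, and let
`u` minimize `E` over `X` with `E(u)` finite. Then for every `v ∈ X`,
`q ∈ Y'` and `w ∈ X` the Riesz representative of `B'q`, one has
`(α/2)‖u - v‖² ≤ F(Bv) + (α/2)‖v - g‖² + F*(q) + (1/(2α))‖w‖² - ⟨w,g⟩`. -/
theorem hilbert_a_posteriori_primal_dual_gap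
    {X Y : Type*} [NormedAddCommGroup X] [InnerProductSpace ℝ X] [CompleteSpace X]
    [NormedAddCommGroup Y] [NormedSpace ℝ Y]
    (B : X →L[ℝ] Y) (F : Y → EReal)
    (hF_bot : ∀ p, F p ≠ ⊥) (hF_proper : ∃ p, F p ≠ ⊤)
    (hF_conv : ∀ p₁ p₂ : Y, ∀ t : ℝ, 0 ≤ t → t ≤ 1 →
      F (t • p₁ + (1 - t) • p₂) ≤ (t : EReal) * F p₁ + ((1 - t : ℝ) : EReal) * F p₂)
    (α : ℝ) (hα : 0 < α) (g : X)
    (Fstar : (Y →L[ℝ] ℝ) → EReal)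
    (hFstar : ∀ q : Y →L[ℝ] ℝ, Fstar q = ⨆ p : Y, ((q p : EReal) - F p))
    (E : X → EReal)
    (hE : ∀ v, E v = F (B v) + ((α / 2 * ‖v - g‖ ^ 2 : ℝ) : EReal))
    (u : X) (hu_min : ∀ v : X, E u ≤ E v)
    (hu_top : E u ≠ ⊤) (hu_bot : E u ≠ ⊥)
    (v : X) (q : Y →L[ℝ] ℝ) (w : X) (hw : ∀ x : X, ⟪w, x⟫ = q (B x)) :
    ((α / 2 * ‖u - v‖ ^ 2 : ℝ) : EReal)
      ≤ F (B v) + ((α / 2 * ‖v - g‖ ^ 2 : ℝ) : EReal) + Fstar q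
        + ((1 / (2 * α) * ‖w‖ ^ 2 - ⟪w, g⟫ : ℝ) : EReal) := by
  -- `F (B u)` is a real number
  have hFu_top : F (B u) ≠ ⊤ := by
    intro h
    exact hu_top (by rw [hE u, h, EReal.top_add_of_ne_bot (EReal.coe_ne_bot _)])
  obtain ⟨a, ha⟩ : ∃ a : ℝ, F (B u) = (a : EReal) :=
    ⟨(F (B u)).toReal, (EReal.coe_toReal hFu_top (hF_bot _)).symm⟩
  -- `Fstar q` is not `⊥`
  obtain ⟨p₀, hp₀⟩ := hF_proper
  obtain ⟨c, hc⟩ : ∃ c : ℝ, F p₀ = (c : EReal) :=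
    ⟨(F p₀).toReal, (EReal.coe_toReal hp₀ (hF_bot _)).symm⟩
  have hFs_ge : ((q p₀ - c : ℝ) : EReal) ≤ Fstar q := by
    rw [hFstar]
    refine le_iSup_of_le p₀ ?_
    rw [hc, EReal.coe_sub]
  have hFs_bot : Fstar q ≠ ⊥ := by
    intro h
    rw [h, le_bot_iff] at hFs_ge
    exact EReal.coe_ne_bot _ hFs_ge
  -- Case: `F (B v) = ⊤`
  by_cases hFv_top : F (B v) = ⊤
  · rw [hFv_top, EReal.top_add_of_ne_bot (EReal.coe_ne_bot _),
      EReal.top_add_of_ne_bot hFs_bot, EReal.top_add_of_ne_bot (EReal.coe_ne_bot _)]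
    exact le_top
  obtain ⟨b, hb⟩ : ∃ b : ℝ, F (B v) = (b : EReal) :=
    ⟨(F (B v)).toReal, (EReal.coe_toReal hFv_top (hF_bot _)).symm⟩
  -- Case: `Fstar q = ⊤`
  by_cases hFs_top : Fstar q = ⊤
  · rw [hb, hFs_top, ← EReal.coe_add, EReal.add_top_of_ne_bot (EReal.coe_ne_bot _),
      EReal.top_add_of_ne_bot (EReal.coe_ne_bot _)]
    exact le_top
  obtain ⟨s, hs⟩ : ∃ s : ℝ, Fstar q = (s : EReal) :=
    ⟨(Fstar q).toReal, (EReal.coe_toReal hFs_top hFs_bot).symm⟩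
  -- Weak duality at `p = B u`
  have hs_ge : q (B u) - a ≤ s := by
    have h1 : ((q (B u) - a : ℝ) : EReal) ≤ Fstar q := by
      rw [hFstar]
      refine le_iSup_of_le (B u) ?_
      rw [ha, EReal.coe_sub]
    rw [hs] at h1
    exact EReal.coe_le_coe_iff.1 h1
  -- Quadratic growth from minimality and strong convexity:
  -- `a + (α/2)‖u-g‖² + (α/2)‖u-v‖² ≤ b + (α/2)‖v-g‖²`
  have key : a + α / 2 * ‖u - g‖ ^ 2 + α / 2 * ‖u - v‖ ^ 2
      ≤ b + α / 2 * ‖v - g‖ ^ 2 := by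
    -- For each `t ∈ (0,1]`, convexity plus minimality gives the estimate
    -- with factor `(1 - t)`.
    have step : ∀ t : ℝ, 0 < t → t ≤ 1 →
        a + α / 2 * ‖u - g‖ ^ 2 + α / 2 * (1 - t) * ‖u - v‖ ^ 2
          ≤ b + α / 2 * ‖v - g‖ ^ 2 := by
      intro t ht0 ht1
      set ut : X := t • v + (1 - t) • u with hut
      have hBut : B ut = t • B v + (1 - t) • B u := by
        simp [hut, map_add, map_smul]
      have hconv : F (B ut) ≤ ((t * b + (1 - t) * a : ℝ) : EReal) := by
        rw [hBut]
        refine le_trans (hF_conv (B v) (B u) t ht0.le ht1) ?_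
        rw [ha, hb, EReal.coe_add, EReal.coe_mul, EReal.coe_mul]
      have hquad : ‖ut - g‖ ^ 2
          = t * ‖v - g‖ ^ 2 + (1 - t) * ‖u - g‖ ^ 2 - t * (1 - t) * ‖v - u‖ ^ 2 := by
        have hrw : ut - g = t • (v - g) + (1 - t) • (u - g) := by
          rw [hut]; module
        rw [hrw, quad_convex_identity (v - g) (u - g) t]
        congr 3
        abel_nf
      have hmin : E u ≤ E ut := hu_min ut
      rw [hE u, hE ut, ha] at hmin
      have hmin2 : ((a + α / 2 * ‖u - g‖ ^ 2 : ℝ) : EReal)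
          ≤ (((t * b + (1 - t) * a) + α / 2 * ‖ut - g‖ ^ 2 : ℝ) : EReal) := by
        rw [EReal.coe_add, EReal.coe_add]
        exact le_trans hmin (add_le_add_left hconv _)
      have hmin3 : a + α / 2 * ‖u - g‖ ^ 2
          ≤ (t * b + (1 - t) * a) + α / 2 * ‖ut - g‖ ^ 2 :=
        EReal.coe_le_coe_iff.1 hmin2
      rw [hquad] at hmin3
      have hnorm : ‖v - u‖ = ‖u - v‖ := norm_sub_rev v u
      rw [hnorm] at hmin3
      nlinarith [hmin3, ht0, sq_nonneg ‖u - v‖]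
    -- Pass to the limit `t → 0`.
    have hk : ∀ ε : ℝ, 0 < ε →
        a + α / 2 * ‖u - g‖ ^ 2 + α / 2 * ‖u - v‖ ^ 2
          ≤ (b + α / 2 * ‖v - g‖ ^ 2) + ε := by
      intro ε hε
      set K : ℝ := α / 2 * ‖u - v‖ ^ 2 with hK
      have hK0 : 0 ≤ K := by positivity
      set t : ℝ := min 1 (ε / (K + 1)) with ht
      have ht0 : 0 < t := lt_min one_pos (by positivity)
      have ht1 : t ≤ 1 := min_le_left _ _
      have htK : t * K ≤ ε := by
        have h1 : t ≤ ε / (K + 1) := min_le_right _ _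
        have h2 : t * K ≤ (ε / (K + 1)) * K := by
          apply mul_le_mul_of_nonneg_right h1 hK0
        have h3 : (ε / (K + 1)) * K ≤ ε := by
          rw [div_mul_eq_mul_div, div_le_iff₀ (by positivity)]
          nlinarith
        linarith
      have := step t ht0 ht1
      have hexp : α / 2 * (1 - t) * ‖u - v‖ ^ 2 = K - t * K := by
        rw [hK]; ring
      rw [hexp] at this
      linarith
    linarith [le_of_forall_pos_le_add hk]
  -- Cauchy–Schwarz and Young's inequality
  have hcs : -(‖w‖ * ‖u - g‖) ≤ ⟪w, u⟫ - ⟪w, g⟫ := by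
    have h1 : |⟪w, u - g⟫| ≤ ‖w‖ * ‖u - g‖ := abs_real_inner_le_norm w (u - g)
    have h2 : ⟪w, u - g⟫ = ⟪w, u⟫ - ⟪w, g⟫ := inner_sub_right w u g
    rw [h2] at h1
    linarith [neg_abs_le (⟪w, u⟫ - ⟪w, g⟫), abs_le.1 h1]
  have hyoung : ‖w‖ * ‖u - g‖ ≤ 1 / (2 * α) * ‖w‖ ^ 2 + α / 2 * ‖u - g‖ ^ 2 := by
    have h0 : 0 ≤ (‖w‖ - α * ‖u - g‖) ^ 2 := sq_nonneg _
    have h1 : 2 * α * (‖w‖ * ‖u - g‖) ≤ ‖w‖ ^ 2 + α ^ 2 * ‖u - g‖ ^ 2 := by nlinarith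
    have h5 : 1 / (2 * α) * ‖w‖ ^ 2 + α / 2 * ‖u - g‖ ^ 2
        = (‖w‖ ^ 2 + α ^ 2 * ‖u - g‖ ^ 2) / (2 * α) := by
      field_simp
    rw [h5, le_div_iff₀ (by positivity)]
    nlinarith [h1]
  -- Combine everything
  have hwu : ⟪w, u⟫ = q (B u) := hw u
  have final : α / 2 * ‖u - v‖ ^ 2
      ≤ b + α / 2 * ‖v - g‖ ^ 2 + s + (1 / (2 * α) * ‖w‖ ^ 2 - ⟪w, g⟫) := by
    nlinarith [key, hs_ge, hcs, hyoung, hwu]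
  rw [hb, hs, ← EReal.coe_add, ← EReal.coe_add, ← EReal.coe_add]
  exact_mod_cast final
end

section
/- Pointwise equivalence of the V-function distance and the quasi-norm weight: let 1 < σ < ∞ and define V : ℝ^d → ℝ^d by V(a) = ‖a‖^{(σ-2)/2} a for a ≠ 0 and V(0) = 0. There exist constants c, C > 0, depending only on σ, such that for all a, b ∈ ℝ^d, c (‖a‖ + ‖b‖)^{σ-2} ‖a - b‖² ≤ ‖V(a) - V(b)‖² ≤ C (‖a‖ + ‖b‖)^{σ-2} ‖a - b‖² (when a = b = 0 both outer expressions are interpreted as 0). -/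
set_option maxHeartbeats 1000000

open Real

private lemma VQ_bern {q r : ℝ} (hq : 0 < q) (hr0 : 0 ≤ r) (hr1 : r ≤ 1) :
    min 1 q * (1 - r) ≤ 1 - r ^ q ∧ 1 - r ^ q ≤ max 1 q * (1 - r) := by
  rcases le_total 1 q with h1 | h1
  · rw [min_eq_left h1, max_eq_right h1]
    constructor
    · rcases eq_or_lt_of_le hr0 with h0 | h0
      · rw [← h0, zero_rpow hq.ne']; norm_num
      · have : r ^ q ≤ r ^ (1:ℝ) := rpow_le_rpow_of_exponent_ge h0 hr1 h1
        rw [rpow_one] at this; linarith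
    · have h := one_add_mul_self_le_rpow_one_add (by linarith : (-1:ℝ) ≤ r - 1) h1
      rw [show (1:ℝ) + (r - 1) = r by ring] at h
      nlinarith
  · rw [min_eq_right h1, max_eq_left h1]
    constructor
    · have h := rpow_one_add_le_one_add_mul_self (by linarith : (-1:ℝ) ≤ r - 1) hq.le h1
      rw [show (1:ℝ) + (r - 1) = r by ring] at h
      nlinarith
    · rcases eq_or_lt_of_le hr0 with h0 | h0
      · rw [← h0, zero_rpow hq.ne']; norm_num
      · have : r ^ (1:ℝ) ≤ r ^ q := rpow_le_rpow_of_exponent_ge h0 hr1 h1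
        rw [rpow_one] at this; linarith

private lemma VQ_diffB {q t u : ℝ} (hq : 0 < q) (hu : 0 ≤ u) (hut : u ≤ t) :
    min 1 q * (t ^ (q-1) * (t - u)) ≤ t ^ q - u ^ q ∧
    t ^ q - u ^ q ≤ max 1 q * (t ^ (q-1) * (t - u)) := by
  have ht : 0 ≤ t := hu.trans hut
  rcases eq_or_lt_of_le ht with h0 | h0
  · have hu0 : u = 0 := le_antisymm (by linarith) hu
    rw [hu0, ← h0]
    simp [zero_rpow hq.ne']
  · have hb := VQ_bern hq (div_nonneg hu h0.le) ((div_le_one h0).2 hut)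
    have htq : (0:ℝ) < t ^ q := rpow_pos_of_pos h0 q
    have e1 : (u / t) ^ q = u ^ q / t ^ q := div_rpow hu h0.le q
    have e2 : t ^ q = t ^ (q-1) * t := by
      rw [← rpow_add_one h0.ne' (q-1)]; norm_num
    have hq1 : t ^ q * (1 - u/t) = t ^ (q-1) * (t - u) := by
      rw [e2]; field_simp
    have hq2 : t ^ q * (1 - (u/t) ^ q) = t ^ q - u ^ q := by
      rw [e1]; field_simp
    constructor
    · calc min 1 q * (t ^ (q-1) * (t - u)) = t ^ q * (min 1 q * (1 - u/t)) := by
            rw [← hq1]; ring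
        _ ≤ t ^ q * (1 - (u/t) ^ q) := mul_le_mul_of_nonneg_left hb.1 htq.le
        _ = t ^ q - u ^ q := hq2
    · calc t ^ q - u ^ q = t ^ q * (1 - (u/t) ^ q) := hq2.symm
        _ ≤ t ^ q * (max 1 q * (1 - u/t)) := mul_le_mul_of_nonneg_left hb.2 htq.le
        _ = max 1 q * (t ^ (q-1) * (t - u)) := by rw [← hq1]; ring

private lemma VQ_ratio {q t u : ℝ} (hq : 0 < q) (hu : 0 ≤ u) (hut : u ≤ t) :
    min 1 ((2:ℝ)^(1-q)) * (t+u) ^ (q-1) ≤ t ^ (q-1) ∧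
    t ^ (q-1) ≤ max 1 ((2:ℝ)^(1-q)) * (t+u) ^ (q-1) := by
  have ht : 0 ≤ t := hu.trans hut
  have h2q : (0:ℝ) < (2:ℝ)^(1-q) := rpow_pos_of_pos two_pos _
  have h2q' : (0:ℝ) < (2:ℝ)^(q-1) := rpow_pos_of_pos two_pos _
  have hmul : (2:ℝ)^(1-q) * (2:ℝ)^(q-1) = 1 := by
    rw [← rpow_add two_pos]; norm_num
  have hmin1 : min 1 ((2:ℝ)^(1-q)) ≤ 1 := min_le_left _ _
  have hmax1 : (1:ℝ) ≤ max 1 ((2:ℝ)^(1-q)) := le_max_left _ _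
  rcases eq_or_lt_of_le ht with h0 | h0
  · have hu0 : u = 0 := le_antisymm (by linarith) hu
    rw [hu0, ← h0, add_zero]
    have h1 : (0:ℝ) ≤ (0:ℝ)^(q-1) := rpow_nonneg le_rfl _
    constructor
    · calc min 1 ((2:ℝ)^(1-q)) * (0:ℝ)^(q-1) ≤ 1 * (0:ℝ)^(q-1) :=
            mul_le_mul_of_nonneg_right hmin1 h1
        _ = (0:ℝ)^(q-1) := one_mul _
    · calc (0:ℝ)^(q-1) = 1 * (0:ℝ)^(q-1) := (one_mul _).symm
        _ ≤ max 1 ((2:ℝ)^(1-q)) * (0:ℝ)^(q-1) := mul_le_mul_of_nonneg_right hmax1 h1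
  · have htu : (0:ℝ) < t + u := by linarith
    have hP : (0:ℝ) ≤ (t+u)^(q-1) := rpow_nonneg htu.le _
    have hT : (0:ℝ) ≤ t^(q-1) := rpow_nonneg h0.le _
    rcases le_total 1 q with h1 | h1
    · constructor
      · have hle : (t+u) ^ (q-1) ≤ ((2:ℝ)*t) ^ (q-1) :=
          rpow_le_rpow htu.le (by linarith) (by linarith)
        rw [mul_rpow (by norm_num) h0.le] at hle
        calc min 1 ((2:ℝ)^(1-q)) * (t+u)^(q-1) ≤ (2:ℝ)^(1-q) * (t+u)^(q-1) :=
              mul_le_mul_of_nonneg_right (min_le_right _ _) hP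
          _ ≤ (2:ℝ)^(1-q) * ((2:ℝ)^(q-1) * t^(q-1)) := mul_le_mul_of_nonneg_left hle h2q.le
          _ = ((2:ℝ)^(1-q) * (2:ℝ)^(q-1)) * t^(q-1) := by ring
          _ = t^(q-1) := by rw [hmul, one_mul]
      · have hle : t ^ (q-1) ≤ (t+u) ^ (q-1) :=
          rpow_le_rpow h0.le (by linarith) (by linarith)
        calc t^(q-1) ≤ (t+u)^(q-1) := hle
          _ = 1 * (t+u)^(q-1) := (one_mul _).symm
          _ ≤ max 1 ((2:ℝ)^(1-q)) * (t+u)^(q-1) := mul_le_mul_of_nonneg_right hmax1 hP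
    · constructor
      · have hle : (t+u) ^ (q-1) ≤ t ^ (q-1) :=
          rpow_le_rpow_of_nonpos h0 (by linarith) (by linarith)
        calc min 1 ((2:ℝ)^(1-q)) * (t+u)^(q-1) ≤ 1 * (t+u)^(q-1) :=
              mul_le_mul_of_nonneg_right hmin1 hP
          _ = (t+u)^(q-1) := one_mul _
          _ ≤ t^(q-1) := hle
      · have hhalf : (0:ℝ) < (t+u)/2 := by linarith
        have hle : t ^ (q-1) ≤ ((t+u)/2) ^ (q-1) :=
          rpow_le_rpow_of_nonpos hhalf (by linarith) (by linarith)
        have hdiv : ((t+u)/2) ^ (q-1) = (t+u)^(q-1) / (2:ℝ)^(q-1) :=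
          div_rpow htu.le (by norm_num) _
        have hinv : (2:ℝ)^(1-q) = ((2:ℝ)^(q-1))⁻¹ := eq_inv_of_mul_eq_one_left hmul
        have heq : (t+u)^(q-1) / (2:ℝ)^(q-1) = (2:ℝ)^(1-q) * (t+u)^(q-1) := by
          rw [div_eq_mul_inv, ← hinv, mul_comm]
        calc t^(q-1) ≤ ((t+u)/2)^(q-1) := hle
          _ = (2:ℝ)^(1-q) * (t+u)^(q-1) := by rw [hdiv, heq]
          _ ≤ max 1 ((2:ℝ)^(1-q)) * (t+u)^(q-1) :=
              mul_le_mul_of_nonneg_right (le_max_right _ _) hP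
-- one-sided (u ≤ t) endpoint bounds, un-squared
private lemma VQ_em {q t u : ℝ} (hq : 0 < q) (hu : 0 ≤ u) (hut : u ≤ t) :
    (min 1 q * min 1 ((2:ℝ)^(1-q))) * ((t+u) ^ (q-1) * (t - u)) ≤ t ^ q - u ^ q ∧
    t ^ q - u ^ q ≤ (max 1 q * max 1 ((2:ℝ)^(1-q))) * ((t+u) ^ (q-1) * (t - u)) := by
  obtain ⟨d1, d2⟩ := VQ_diffB hq hu hut
  obtain ⟨r1, r2⟩ := VQ_ratio (t := t) (u := u) hq hu hut
  have htu0 : (0:ℝ) ≤ t - u := sub_nonneg.2 hut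
  have hm : (0:ℝ) ≤ min 1 q := le_min zero_le_one hq.le
  have hM : (0:ℝ) ≤ max 1 q := le_trans zero_le_one (le_max_left _ _)
  constructor
  · calc (min 1 q * min 1 ((2:ℝ)^(1-q))) * ((t+u) ^ (q-1) * (t - u))
        = min 1 q * ((min 1 ((2:ℝ)^(1-q)) * (t+u)^(q-1)) * (t-u)) := by ring
      _ ≤ min 1 q * (t^(q-1) * (t-u)) :=
          mul_le_mul_of_nonneg_left (mul_le_mul_of_nonneg_right r1 htu0) hm
      _ ≤ t ^ q - u ^ q := d1
  · calc t ^ q - u ^ q ≤ max 1 q * (t^(q-1) * (t-u)) := d2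
      _ ≤ max 1 q * ((max 1 ((2:ℝ)^(1-q)) * (t+u)^(q-1)) * (t-u)) :=
          mul_le_mul_of_nonneg_left (mul_le_mul_of_nonneg_right r2 htu0) hM
      _ = (max 1 q * max 1 ((2:ℝ)^(1-q))) * ((t+u) ^ (q-1) * (t - u)) := by ring

-- squared, symmetric minus-endpoint
private lemma VQ_em_sq {q : ℝ} (hq : 0 < q) (t u : ℝ) (ht : 0 ≤ t) (hu : 0 ≤ u) :
    (min 1 q * min 1 ((2:ℝ)^(1-q)))^2 * (((t+u) ^ (q-1))^2 * (t - u)^2) ≤ (t ^ q - u ^ q)^2 ∧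
    (t ^ q - u ^ q)^2 ≤ (max 1 q * max 1 ((2:ℝ)^(1-q)))^2 * (((t+u) ^ (q-1))^2 * (t - u)^2) := by
  have key : ∀ a b : ℝ, 0 ≤ b → b ≤ a →
      (min 1 q * min 1 ((2:ℝ)^(1-q)))^2 * (((a+b) ^ (q-1))^2 * (a - b)^2) ≤ (a ^ q - b ^ q)^2 ∧
      (a ^ q - b ^ q)^2 ≤ (max 1 q * max 1 ((2:ℝ)^(1-q)))^2 * (((a+b) ^ (q-1))^2 * (a - b)^2) := by
    intro a b hb hba
    obtain ⟨e1, e2⟩ := VQ_em hq hb hba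
    have hm : (0:ℝ) ≤ min 1 q * min 1 ((2:ℝ)^(1-q)) :=
      mul_nonneg (le_min zero_le_one hq.le)
        (le_min zero_le_one (rpow_pos_of_pos two_pos _).le)
    have hlhs : (0:ℝ) ≤ (min 1 q * min 1 ((2:ℝ)^(1-q))) * ((a+b) ^ (q-1) * (a - b)) :=
      mul_nonneg hm (mul_nonneg (rpow_nonneg (by linarith) _) (by linarith))
    constructor
    · have := pow_le_pow_left₀ hlhs e1 2
      calc (min 1 q * min 1 ((2:ℝ)^(1-q)))^2 * (((a+b) ^ (q-1))^2 * (a - b)^2)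
          = ((min 1 q * min 1 ((2:ℝ)^(1-q))) * ((a+b) ^ (q-1) * (a - b)))^2 := by ring
        _ ≤ (a ^ q - b ^ q)^2 := this
    · have hrhs : (0:ℝ) ≤ a ^ q - b ^ q := le_trans hlhs e1
      have := pow_le_pow_left₀ hrhs e2 2
      calc (a ^ q - b ^ q)^2
          ≤ ((max 1 q * max 1 ((2:ℝ)^(1-q))) * ((a+b) ^ (q-1) * (a - b)))^2 := this
        _ = (max 1 q * max 1 ((2:ℝ)^(1-q)))^2 * (((a+b) ^ (q-1))^2 * (a - b)^2) := by ring
  rcases le_total u t with h | h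
  · exact key t u hu h
  · obtain ⟨k1, k2⟩ := key u t ht h
    rw [show u + t = t + u by ring, show (u - t)^2 = (t-u)^2 by ring,
      show (u^q - t^q)^2 = (t^q - u^q)^2 by ring] at k1 k2
    exact ⟨k1, k2⟩

-- squared plus-endpoint
private lemma VQ_ep_sq {q : ℝ} (hq : 0 < q) (t u : ℝ) (ht : 0 ≤ t) (hu : 0 ≤ u) :
    ((2:ℝ)^(-q))^2 * (((t+u) ^ q)^2) ≤ (t ^ q + u ^ q)^2 ∧
    (t ^ q + u ^ q)^2 ≤ 4 * (((t+u) ^ q)^2) := by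
  have htu : (0:ℝ) ≤ t + u := by linarith
  have hQ : (0:ℝ) ≤ (t+u)^q := rpow_nonneg htu _
  have hT : (0:ℝ) ≤ t^q := rpow_nonneg ht _
  have hU : (0:ℝ) ≤ u^q := rpow_nonneg hu _
  have hlow : (2:ℝ)^(-q) * (t+u)^q ≤ t^q + u^q := by
    have hhalf : ((t+u)/2)^q = (t+u)^q / (2:ℝ)^q := div_rpow htu (by norm_num) _
    have h2 : (2:ℝ)^(-q) = ((2:ℝ)^q)⁻¹ := by
      rw [rpow_neg (by norm_num : (0:ℝ) ≤ 2)]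
    have hmax : ((t+u)/2)^q ≤ t^q + u^q := by
      rcases le_total t u with h | h
      · have : ((t+u)/2)^q ≤ u^q := rpow_le_rpow (by linarith) (by linarith) hq.le
        linarith
      · have : ((t+u)/2)^q ≤ t^q := rpow_le_rpow (by linarith) (by linarith) hq.le
        linarith
    calc (2:ℝ)^(-q) * (t+u)^q = (t+u)^q / (2:ℝ)^q := by
          rw [h2, div_eq_mul_inv, mul_comm]
      _ = ((t+u)/2)^q := hhalf.symm
      _ ≤ t^q + u^q := hmax
  have hhigh : t^q + u^q ≤ 2 * (t+u)^q := by
    have h1 : t^q ≤ (t+u)^q := rpow_le_rpow ht (by linarith) hq.le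
    have h2 : u^q ≤ (t+u)^q := rpow_le_rpow hu (by linarith) hq.le
    linarith
  have h2q : (0:ℝ) ≤ (2:ℝ)^(-q) := (rpow_pos_of_pos two_pos _).le
  constructor
  · have hnn : (0:ℝ) ≤ (2:ℝ)^(-q) * (t+u)^q := mul_nonneg h2q hQ
    have := pow_le_pow_left₀ hnn hlow 2
    calc ((2:ℝ)^(-q))^2 * (((t+u) ^ q)^2) = ((2:ℝ)^(-q) * (t+u)^q)^2 := by ring
      _ ≤ (t^q + u^q)^2 := this
  · have := pow_le_pow_left₀ (by linarith : (0:ℝ) ≤ t^q + u^q) hhigh 2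
    calc (t^q + u^q)^2 ≤ (2 * (t+u)^q)^2 := this
      _ = 4 * (((t+u) ^ q)^2) := by ring


private lemma VQ_affine {A B tu w : ℝ} (htu : 0 ≤ tu) (hw1 : -tu ≤ w) (hw2 : w ≤ tu)
    (h1 : 0 ≤ A - B*tu) (h2 : 0 ≤ A + B*tu) : 0 ≤ A - B*w := by
  rcases eq_or_lt_of_le htu with h0 | h0
  · have hw : w = 0 := le_antisymm (by linarith) (by linarith)
    subst hw; rw [← h0] at h1; simpa using h1
  · have hsum : 0 ≤ 2*tu*(A - B*w) := by
      have hiden : 2*tu*(A - B*w) = (A - B*tu)*(tu + w) + (A + B*tu)*(tu - w) := by ring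
      rw [hiden]
      exact add_nonneg (mul_nonneg h1 (by linarith)) (mul_nonneg h2 (by linarith))
    nlinarith [hsum, h0]

private lemma VQ_scalarKey {q : ℝ} (hq : 0 < q) : ∃ c C : ℝ, 0 < c ∧ 0 < C ∧
    ∀ t u w : ℝ, 0 ≤ t → 0 ≤ u → |w| ≤ t * u →
      c * (((t+u) ^ (q-1))^2 * (t^2 - 2*w + u^2)) ≤
        (t^(q-1)*t)^2 - 2*(t^(q-1)*u^(q-1))*w + (u^(q-1)*u)^2 ∧
      (t^(q-1)*t)^2 - 2*(t^(q-1)*u^(q-1))*w + (u^(q-1)*u)^2 ≤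
        C * (((t+u) ^ (q-1))^2 * (t^2 - 2*w + u^2)) := by
  have h2pos : (0:ℝ) < (2:ℝ)^(1-q) := rpow_pos_of_pos two_pos _
  have hmpos : (0:ℝ) < min 1 q * min 1 ((2:ℝ)^(1-q)) :=
    mul_pos (lt_min one_pos hq) (lt_min one_pos h2pos)
  have hMpos : (0:ℝ) < max 1 q * max 1 ((2:ℝ)^(1-q)) :=
    mul_pos (lt_of_lt_of_le one_pos (le_max_left _ _))
      (lt_of_lt_of_le one_pos (le_max_left _ _))
  have h2negpos : (0:ℝ) < (2:ℝ)^(-q) := rpow_pos_of_pos two_pos _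
  refine ⟨min ((min 1 q * min 1 ((2:ℝ)^(1-q)))^2) (((2:ℝ)^(-q))^2),
    max ((max 1 q * max 1 ((2:ℝ)^(1-q)))^2) 4,
    lt_min (pow_pos hmpos 2) (pow_pos h2negpos 2),
    lt_of_lt_of_le four_pos (le_max_right _ _), ?_⟩
  set c := min ((min 1 q * min 1 ((2:ℝ)^(1-q)))^2) (((2:ℝ)^(-q))^2) with hc_def
  set C := max ((max 1 q * max 1 ((2:ℝ)^(1-q)))^2) 4 with hC_def
  intro t u w ht hu hw
  obtain ⟨hw1, hw2⟩ := abs_le.1 hw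
  -- bridging equalities
  have hb : ∀ x : ℝ, 0 ≤ x → x ^ q = x ^ (q-1) * x := by
    intro x hx
    rcases eq_or_lt_of_le hx with h0 | h0
    · rw [← h0, zero_rpow hq.ne', mul_zero]
    · rw [← rpow_add_one h0.ne' (q-1)]; norm_num
  have et : t ^ q = t ^ (q-1) * t := hb t ht
  have eu : u ^ q = u ^ (q-1) * u := hb u hu
  have etu : (t+u) ^ q = (t+u) ^ (q-1) * (t+u) := hb (t+u) (by linarith)
  -- endpoint inequalities in bridged form
  have hPsq : (0:ℝ) ≤ ((t+u)^(q-1))^2 * (t-u)^2 := by positivity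
  have hPsq' : (0:ℝ) ≤ ((t+u)^(q-1))^2 * (t+u)^2 := by positivity
  obtain ⟨m1, m2⟩ := VQ_em_sq hq t u ht hu
  obtain ⟨p1, p2⟩ := VQ_ep_sq hq t u ht hu
  rw [et, eu] at m1 m2 p1 p2
  rw [etu] at p1 p2
  have hm1 : c * (((t+u)^(q-1))^2 * (t-u)^2) ≤ (t^(q-1)*t - u^(q-1)*u)^2 :=
    le_trans (mul_le_mul_of_nonneg_right (min_le_left _ _) hPsq) m1
  have hp1 : c * (((t+u)^(q-1))^2 * (t+u)^2) ≤ (t^(q-1)*t + u^(q-1)*u)^2 := by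
    refine le_trans (mul_le_mul_of_nonneg_right (min_le_right _ _) hPsq') ?_
    calc ((2:ℝ)^(-q))^2 * (((t+u)^(q-1))^2 * (t+u)^2)
        = ((2:ℝ)^(-q))^2 * (((t+u)^(q-1) * (t+u))^2) := by ring
      _ ≤ (t^(q-1)*t + u^(q-1)*u)^2 := p1
  have hm2 : (t^(q-1)*t - u^(q-1)*u)^2 ≤ C * (((t+u)^(q-1))^2 * (t-u)^2) :=
    le_trans m2 (mul_le_mul_of_nonneg_right (le_max_left _ _) hPsq)
  have hp2 : (t^(q-1)*t + u^(q-1)*u)^2 ≤ C * (((t+u)^(q-1))^2 * (t+u)^2) := by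
    refine le_trans ?_ (mul_le_mul_of_nonneg_right (le_max_right _ _) hPsq')
    calc (t^(q-1)*t + u^(q-1)*u)^2 ≤ 4 * (((t+u)^(q-1) * (t+u))^2) := p2
      _ = 4 * (((t+u)^(q-1))^2 * (t+u)^2) := by ring
  have htu0 : (0:ℝ) ≤ t * u := mul_nonneg ht hu
  constructor
  · have := VQ_affine (A := (t^(q-1)*t)^2 + (u^(q-1)*u)^2 - c * (((t+u)^(q-1))^2 * (t^2+u^2)))
      (B := 2*(t^(q-1)*u^(q-1) - c * ((t+u)^(q-1))^2)) (tu := t*u) (w := w)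
      htu0 hw1 hw2 (by nlinarith [hm1]) (by nlinarith [hp1])
    nlinarith [this]
  · have := VQ_affine (A := C * (((t+u)^(q-1))^2 * (t^2+u^2)) - (t^(q-1)*t)^2 - (u^(q-1)*u)^2)
      (B := 2*(C * ((t+u)^(q-1))^2 - t^(q-1)*u^(q-1))) (tu := t*u) (w := w)
      htu0 hw1 hw2 (by nlinarith [hm2]) (by nlinarith [hp2])
    nlinarith [this]

/-- Pointwise equivalence of the V-function distance and the quasi-norm
weight: for `1 < σ < ∞` and `V(a) = ‖a‖^{(σ-2)/2} a` (with `V(0) = 0`),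
there are constants `c, C > 0` depending only on `σ` such that for all
`a, b ∈ ℝ^d`,
`c (‖a‖+‖b‖)^{σ-2} ‖a-b‖² ≤ ‖V(a)-V(b)‖² ≤ C (‖a‖+‖b‖)^{σ-2} ‖a-b‖²`. -/
theorem V_function_quasinorm_equivalence
    (σ : ℝ) (hσl : 1 < σ) :
    ∃ c C : ℝ, 0 < c ∧ 0 < C ∧
      ∀ (d : ℕ) (V : EuclideanSpace ℝ (Fin d) → EuclideanSpace ℝ (Fin d)),
        (∀ a : EuclideanSpace ℝ (Fin d), a ≠ 0 → V a = ‖a‖ ^ ((σ - 2) / 2) • a) →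
        V 0 = 0 →
        ∀ a b : EuclideanSpace ℝ (Fin d),
          c * (‖a‖ + ‖b‖) ^ (σ - 2) * ‖a - b‖ ^ 2 ≤ ‖V a - V b‖ ^ 2 ∧
          ‖V a - V b‖ ^ 2 ≤ C * (‖a‖ + ‖b‖) ^ (σ - 2) * ‖a - b‖ ^ 2 := by
  obtain ⟨c, C, hc, hC, H⟩ := VQ_scalarKey (q := σ/2) (by linarith)
  refine ⟨c, C, hc, hC, ?_⟩
  intro d V hV hV0 a b
  have hVa : ∀ x : EuclideanSpace ℝ (Fin d), V x = ‖x‖ ^ ((σ - 2) / 2) • x := by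
    intro x
    by_cases hx : x = 0
    · rw [hx, hV0, smul_zero]
    · exact hV x hx
  have hs : σ/2 - 1 = (σ - 2)/2 := by ring
  have Hab := H ‖a‖ ‖b‖ (inner ℝ a b : ℝ) (norm_nonneg a) (norm_nonneg b)
    (abs_real_inner_le_norm a b)
  rw [hs] at Hab
  -- compute ‖V a - V b‖ ^ 2
  have hna : (0:ℝ) ≤ ‖a‖ ^ ((σ-2)/2) := rpow_nonneg (norm_nonneg a) _
  have hnb : (0:ℝ) ≤ ‖b‖ ^ ((σ-2)/2) := rpow_nonneg (norm_nonneg b) _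
  have key : ‖V a - V b‖ ^ 2
      = (‖a‖^((σ-2)/2) * ‖a‖)^2 - 2*(‖a‖^((σ-2)/2) * ‖b‖^((σ-2)/2)) * (inner ℝ a b : ℝ)
        + (‖b‖^((σ-2)/2) * ‖b‖)^2 := by
    rw [hVa a, hVa b, norm_sub_sq_real]
    rw [norm_smul, norm_smul, real_inner_smul_left, real_inner_smul_right]
    rw [Real.norm_eq_abs, abs_of_nonneg hna, Real.norm_eq_abs, abs_of_nonneg hnb]
    ring
  have hab : ‖a - b‖ ^ 2 = ‖a‖^2 - 2*(inner ℝ a b : ℝ) + ‖b‖^2 := norm_sub_sq_real a b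
  have hpow : ((‖a‖ + ‖b‖) ^ ((σ-2)/2))^2 = (‖a‖ + ‖b‖) ^ (σ - 2) := by
    rw [← Real.rpow_natCast ((‖a‖ + ‖b‖) ^ ((σ-2)/2)) 2,
      ← Real.rpow_mul (by positivity : (0:ℝ) ≤ ‖a‖ + ‖b‖)]
    congr 1
    push_cast
    ring
  rw [key, hab, ← hpow]
  constructor
  · nlinarith [Hab.1]
  · nlinarith [Hab.2]
end
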